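/- arXiv:2601.13576 — 2 statements merged into one kernel-verified Lean document; each statement's English description precedes it below -/
import Mathlib

section
/- Define v(0,0,1,0)=h1/μ, v(0,0,0,1)=h2/μ, v(0,1,1,0)=h0/μ0 + h1/μ + min(h1/μ, h2/μ), and v(0,1,0,1)=h0/μ0 + h2/μ + (μ0/(μ0+μ))·min(h1/μ, 2h2/μ) + (μ/(μ0+μ))·min(h1/μ, h2/μ). Then v(0,0,1,0) − v(0,0,0,1) − v(0,1,1,0) + v(0,1,0,1) ≥ 0. -/
theorem stmt_2 (μ0 μ h0 h1 h2 : ℝ)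
    (hμ0 : 0 < μ0) (hμ : 0 < μ) (hh0 : 0 < h0) (hh1 : 0 < h1) (hh2 : 0 < h2)
    (hpref : h1 ≥ h2) :
    (h1 / μ) - (h2 / μ)
      - (h0 / μ0 + h1 / μ + min (h1 / μ) (h2 / μ))
      + (h0 / μ0 + h2 / μ + (μ0 / (μ0 + μ)) * min (h1 / μ) (2 * h2 / μ)
          + (μ / (μ0 + μ)) * min (h1 / μ) (h2 / μ)) ≥ 0 := by
  have hs : 0 < μ0 + μ := by linarith
  have h1' : min (h1 / μ) (h2 / μ) = h2 / μ := by
    exact min_eq_right (div_le_div_of_nonneg_right hpref hμ.le)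
  have h2' : h2 / μ ≤ min (h1 / μ) (2 * h2 / μ) := by
    apply le_min
    · exact div_le_div_of_nonneg_right hpref hμ.le
    · apply div_le_div_of_nonneg_right _ hμ.le; linarith
  rw [h1']
  have key : (μ0 / (μ0 + μ)) * min (h1 / μ) (2 * h2 / μ) ≥ (μ0 / (μ0 + μ)) * (h2 / μ) := by
    apply mul_le_mul_of_nonneg_left h2' (by positivity)
  have : μ0 / (μ0 + μ) * (h2 / μ) + μ / (μ0 + μ) * (h2 / μ) = h2 / μ := by
    field_simp
  nlinarith [this, key]
end

section
/- Let μ0, μ1, μ2, h0, h1, h2 > 0 with μ2 ≥ μ1 and h1/μ1 ≥ h2/μ2, and let i ≥ 0 be an integer. Suppose M ≤ h1/μ1 − h2/μ2 + (i·h0/2)(1/μ1 − 1/μ2) and N ≤ h1/μ1 + ((i+1)h0/2)(1/μ1 − 1/μ0). Then ((i+1)(μ2−μ1)h0)/((μ0+μ2)(μ0+μ1)) + (μ0(h1−h2) + (μ2·h1 − μ1·h2))/((μ0+μ2)(μ0+μ1)) + (μ0/(μ0+μ2))·M + (μ0(μ2−μ1)/((μ0+μ2)(μ0+μ1)))·N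 ≤ h1/μ1 − h2/μ2 + ((i+1)h0/2)(1/μ1 − 1/μ2). -/
theorem stmt_16 (μ0 μ1 μ2 h0 h1 h2 M N : ℝ)
    (hμ0 : 0 < μ0) (hμ1 : 0 < μ1) (hμ2 : 0 < μ2)
    (hh0 : 0 < h0) (hh1 : 0 < h1) (hh2 : 0 < h2)
    (hμ : μ2 ≥ μ1) (hpref : h1 / μ1 ≥ h2 / μ2) (i : ℕ)
    (hM : M ≤ h1 / μ1 - h2 / μ2 + ((i : ℝ) * h0 / 2) * (1 / μ1 - 1 / μ2))
    (hN : N ≤ h1 / μ1 + (((i : ℝ) + 1) * h0 / 2) * (1 / μ1 - 1 / μ0)) :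
    (((i : ℝ) + 1) * (μ2 - μ1) * h0) / ((μ0 + μ2) * (μ0 + μ1))
      + (μ0 * (h1 - h2) + (μ2 * h1 - μ1 * h2)) / ((μ0 + μ2) * (μ0 + μ1))
      + (μ0 / (μ0 + μ2)) * M
      + (μ0 * (μ2 - μ1) / ((μ0 + μ2) * (μ0 + μ1))) * N
    ≤ h1 / μ1 - h2 / μ2 + (((i : ℝ) + 1) * h0 / 2) * (1 / μ1 - 1 / μ2) := by
  have hi : (0:ℝ) ≤ (i:ℝ) := Nat.cast_nonneg i
  have h02 : 0 < μ0 + μ2 := by linarith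
  have h01 : 0 < μ0 + μ1 := by linarith
  have hc1 : (0:ℝ) ≤ μ0 / (μ0 + μ2) := by positivity
  have hc2 : (0:ℝ) ≤ μ0 * (μ2 - μ1) / ((μ0 + μ2) * (μ0 + μ1)) := by
    apply div_nonneg; nlinarith; positivity
  have hpref' : h2 * μ1 ≤ h1 * μ2 := by
    have := (div_le_div_iff₀ hμ2 hμ1).mp hpref; linarith
  have step : (((i : ℝ) + 1) * (μ2 - μ1) * h0) / ((μ0 + μ2) * (μ0 + μ1))
      + (μ0 * (h1 - h2) + (μ2 * h1 - μ1 * h2)) / ((μ0 + μ2) * (μ0 + μ1))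
      + (μ0 / (μ0 + μ2)) * M
      + (μ0 * (μ2 - μ1) / ((μ0 + μ2) * (μ0 + μ1))) * N
      ≤ (((i : ℝ) + 1) * (μ2 - μ1) * h0) / ((μ0 + μ2) * (μ0 + μ1))
      + (μ0 * (h1 - h2) + (μ2 * h1 - μ1 * h2)) / ((μ0 + μ2) * (μ0 + μ1))
      + (μ0 / (μ0 + μ2)) * (h1 / μ1 - h2 / μ2 + ((i : ℝ) * h0 / 2) * (1 / μ1 - 1 / μ2))
      + (μ0 * (μ2 - μ1) / ((μ0 + μ2) * (μ0 + μ1))) * (h1 / μ1 + (((i : ℝ) + 1) * h0 / 2) * (1 / μ1 - 1 / μ0)) := by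
    gcongr
  refine step.trans ?_
  rw [← sub_nonneg]
  have keyeq : h1 / μ1 - h2 / μ2 + ((i:ℝ) + 1) * h0 / 2 * (1 / μ1 - 1 / μ2) -
      (((i:ℝ) + 1) * (μ2 - μ1) * h0 / ((μ0 + μ2) * (μ0 + μ1)) +
          (μ0 * (h1 - h2) + (μ2 * h1 - μ1 * h2)) / ((μ0 + μ2) * (μ0 + μ1)) +
        μ0 / (μ0 + μ2) * (h1 / μ1 - h2 / μ2 + (i:ℝ) * h0 / 2 * (1 / μ1 - 1 / μ2)) +
      μ0 * (μ2 - μ1) / ((μ0 + μ2) * (μ0 + μ1)) * (h1 / μ1 + ((i:ℝ) + 1) * h0 / 2 * (1 / μ1 - 1 / μ0)))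
      = h0 * μ0 * (μ2 - μ1) / (2 * μ1 * μ2 * (μ0 + μ2)) -
        (h1 * μ2 - h2 * μ1) * (μ0 * μ0 - μ0 * μ0) := by
    field_simp
    ring
  rw [keyeq]
  have : (0:ℝ) ≤ h0 * μ0 * (μ2 - μ1) / (2 * μ1 * μ2 * (μ0 + μ2)) := by
    apply div_nonneg
    · exact mul_nonneg (mul_nonneg hh0.le hμ0.le) (sub_nonneg.mpr hμ)
    · positivity
  linarith
end
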